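/- For a moment sequence s, a point x ∈ X satisfies s_A(x) ∈ F_s if and only if x ∈ W(s), where F_s is the unique face of S_A with s in its relative interior; consequently W(s) = s_A^{-1}(F_s) and F_s = conv cone s_A(W(s)). -/

import Mathlib

/-!
Write `C` for the moment cone and `f = s_A`. Because `s` lies in the relative interior of
the face `F`, every segment from a point of `F` to `s` can be prolonged beyond `s` inside `F`;
hence `F` is the set of `t ∈ C` such that `r • s - t ∈ C` for some `r`. For `t = f x` this says
that `s` has a representing measure with an atom at `x`; conversely, splitting a representing
measure of `s` along the fibre of `f` through `x` exhibits `f x` as a point of `F`. Finally, by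
Richter's theorem every moment vector is a finite conic combination of values of `f`, and since
`F` is a face, a combination landing in `F` only uses values lying in `F`, that is, values at
atoms.
-/

open Set Filter Topology MeasureTheory Module

section IntrinsicInterior

variable {E : Type*} [AddCommGroup E] [Module ℝ E] [TopologicalSpace E]
  [IsTopologicalAddGroup E] [ContinuousSMul ℝ E]

theorem exists_mem_openSegment_of_mem_intrinsicInterior {F : Set E} {s t : E}
    (hs : s ∈ intrinsicInterior ℝ F) (ht : t ∈ F) :
    ∃ z ∈ F, s ∈ openSegment ℝ t z := by
  obtain ⟨s', hs', rfl⟩ := mem_intrinsicInterior.1 hs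
  have hline : ∀ ε : ℝ, (s' : E) + ε • ((s' : E) - t) ∈ affineSpan ℝ F := fun ε => by
    simpa [vsub_eq_sub, vadd_eq_add, add_comm] using
      (affineSpan ℝ F).smul_vsub_vadd_mem ε s'.2 (subset_affineSpan ℝ F ht) s'.2
  let γ : ℝ → affineSpan ℝ F := fun ε => ⟨_, hline ε⟩
  have hγ : Continuous γ := by fun_prop
  have hγ0 : γ 0 = s' := by ext; simp [γ]
  have hev : ∀ᶠ ε in 𝓝[>] (0 : ℝ), γ ε ∈ interior ((↑) ⁻¹' F) :=
    nhdsWithin_le_nhds (hγ.tendsto' 0 _ hγ0 |>.eventually (isOpen_interior.mem_nhds hs'))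
  obtain ⟨ε, hεF, hε⟩ := (hev.and self_mem_nhdsWithin).exists
  refine ⟨_, interior_subset (s := ((↑) : affineSpan ℝ F → E) ⁻¹' F) hεF, ε / (1 + ε),
    1 / (1 + ε), by positivity, by positivity, by field_simp; ring, ?_⟩
  match_scalars <;> field_simp; ring

end IntrinsicInterior

namespace PointedCone

section Face

variable {E : Type*} [AddCommGroup E] [Module ℝ E]

-- the smallest face of `C` containing `s`, when `s ∈ C`
def principalFace (C : PointedCone ℝ E) (s : E) : PointedCone ℝ E where
  carrier := {t | t ∈ C ∧ ∃ r : ℝ, r • s - t ∈ C}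
  zero_mem' := ⟨C.zero_mem, 0, by simp⟩
  add_mem' := fun ⟨ht, r, hr⟩ ⟨hu, q, hq⟩ =>
    ⟨C.add_mem ht hu, r + q, by convert C.add_mem hr hq using 1; module⟩
  smul_mem' := fun ⟨c, hc⟩ t ⟨ht, r, hr⟩ =>
    ⟨Submodule.smul_mem C _ ht, c * r, by
      convert C.smul_mem hc hr using 1
      rw [Nonneg.mk_smul, smul_sub, mul_smul]⟩

variable {C : PointedCone ℝ E} {s t : E}

theorem smul_sub_mem_of_le {r r' : ℝ} (hs : s ∈ C) (hr : r • s - t ∈ C) (hrr' : r ≤ r') :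
    r' • s - t ∈ C := by
  convert C.add_mem hr (C.smul_mem (sub_nonneg.2 hrr') hs) using 1
  module

theorem isFaceOf_principalFace : (C.principalFace s).IsFaceOf C where
  le _ h := h.1
  mem_of_smul_add_mem {x y a} hx hy ha := fun ⟨_, r, hr⟩ =>
    ⟨hx, r / a, by
      convert C.smul_mem (inv_pos.2 ha).le (C.add_mem hr hy) using 1
      simp only [smul_sub, smul_add, smul_smul, div_eq_inv_mul]
      field_simp
      module⟩

theorem _root_.IsExtreme.eq_principalFace [TopologicalSpace E] [IsTopologicalAddGroup E]
    [ContinuousSMul ℝ E] {F : Set E} (hF : IsExtreme ℝ (C : Set E) F)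
    (hs : s ∈ intrinsicInterior ℝ F) : F = C.principalFace s := by
  have hsC : s ∈ C := hF.subset (intrinsicInterior_subset hs)
  ext t
  refine ⟨fun ht => ?_, fun ⟨htC, r, hr⟩ => ?_⟩
  · obtain ⟨z, hz, a, b, ha, hb, -, rfl⟩ :=
      exists_mem_openSegment_of_mem_intrinsicInterior hs ht
    refine ⟨hF.subset ht, a⁻¹, ?_⟩
    convert C.smul_mem (div_pos hb ha).le (hF.subset hz) using 1
    simp only [smul_add, smul_smul, div_eq_inv_mul]
    field_simp
    module
  · obtain ⟨ρ, hρ, hrρ⟩ : ∃ ρ : ℝ, 1 < ρ ∧ r ≤ ρ :=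
      ⟨max r 0 + 2, by linarith [le_max_right r 0], by linarith [le_max_left r 0]⟩
    -- `s` lies strictly between `t` and `(ρ • s - t) / (ρ - 1)`
    have hz : (ρ - 1)⁻¹ • (ρ • s - t) ∈ C :=
      C.smul_mem (inv_nonneg.2 (by linarith)) (smul_sub_mem_of_le hsC hr hrρ)
    refine hF.left_mem_of_mem_openSegment htC hz (intrinsicInterior_subset hs)
      ⟨ρ⁻¹, 1 - ρ⁻¹, by positivity, by simp [inv_lt_one_of_one_lt₀ hρ], by ring, ?_⟩
    have : ρ - 1 ≠ 0 := by linarith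
    match_scalars <;> field_simp; ring

theorem IsFaceOf.eq_hull_inter {F : PointedCone ℝ E} {S : Set E} (hF : F.IsFaceOf C)
    (hS : S ⊆ C) (hFS : F ≤ hull ℝ S) : F = hull ℝ (S ∩ F) := by
  refine le_antisymm (fun t ht => ?_) (Submodule.span_le.2 inter_subset_right)
  have hSC : hull ℝ S ≤ C := Submodule.span_le.2 hS
  induction hFS ht using Submodule.span_induction with
  | mem x hx => exact Submodule.subset_span ⟨hx, ht⟩
  | zero => exact zero_mem _
  | add x y hx hy ihx ihy =>
    obtain ⟨hxF, hyF⟩ := (hF.add_mem_iff_mem (hSC hx) (hSC hy)).1 ht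
    exact add_mem (ihx hxF) (ihy hyF)
  | smul c x hx ih =>
    obtain ⟨c, hc⟩ := c
    rcases hc.eq_or_lt with rfl | hc
    · simp
    · rw [Nonneg.mk_smul] at ht ⊢
      exact Submodule.smul_mem _ ⟨c, hc.le⟩
        (ih (hF.mem_of_smul_add_mem (hSC hx) (zero_mem _) hc (by simpa using ht)))

theorem mem_hull_image_iff {X : Type*} {g : X → E} {A : Set X} :
    t ∈ hull ℝ (g '' A) ↔ ∃ (k : ℕ) (c : Fin k → ℝ) (xs : Fin k → X),
      (∀ j, 0 ≤ c j) ∧ (∀ j, xs j ∈ A) ∧ t = ∑ j, c j • g (xs j) := by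
  rw [hull, Submodule.mem_span_set']
  constructor
  · rintro ⟨k, c, v, rfl⟩
    choose xs hxs hgxs using fun j => (v j).2
    exact ⟨k, fun j => c j, xs, fun j => (c j).2, hxs, by simp [hgxs, Nonneg.coe_smul]⟩
  · rintro ⟨k, c, xs, hc, hxs, rfl⟩
    exact ⟨k, fun j => ⟨c j, hc j⟩, fun j => ⟨g (xs j), mem_image_of_mem g (hxs j)⟩,
      by simp⟩

end Face

theorem exists_dual_nonneg_of_notMem {E : Type*} [NormedAddCommGroup E] [NormedSpace ℝ E]
    [FiniteDimensional ℝ E] {K : PointedCone ℝ E} {p : E} (hp : p ∉ K) :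
    ∃ φ : StrongDual ℝ E, φ ≠ 0 ∧ (∀ t ∈ K, 0 ≤ φ t) ∧ φ p ≤ 0 := by
  by_cases hint : (interior (K : Set E)).Nonempty
  · obtain ⟨φ, hφ, hle⟩ := geometric_hahn_banach_of_nonempty_interior_point K.convex
      (fun h => hp (interior_subset h)) hint
    refine ⟨-φ, neg_ne_zero.2 hφ, fun t ht => neg_nonneg.2 (not_lt.1 fun hpos => ?_),
      by simpa using hle 0 K.zero_mem⟩
    -- a functional bounded above on a cone is nonpositive on it
    obtain ⟨n, hn⟩ := exists_lt_nsmul hpos (φ p)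
    exact (hle _ (K.nsmul_mem ht n)).not_gt (by rwa [map_nsmul])
  · have hspan : vectorSpan ℝ (K : Set E) < ⊤ := by
      rw [lt_top_iff_ne_top, Ne,
        ← AffineSubspace.affineSpan_eq_top_iff_vectorSpan_eq_top_of_nonempty ℝ E E
          ⟨0, K.zero_mem⟩, ← K.convex.interior_nonempty_iff_affineSpan_eq_top]
      exact hint
    obtain ⟨ψ, hψ, hker⟩ := (vectorSpan ℝ (K : Set E)).exists_le_ker_of_lt_top hspan
    have hψK : ∀ t ∈ K, ψ t = 0 := fun t ht =>
      hker (by simpa using vsub_mem_vectorSpan ℝ ht K.zero_mem)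
    rcases le_total 0 (ψ p) with hψp | hψp
    · exact ⟨-LinearMap.toContinuousLinearMap ψ, by simpa using hψ,
        fun t ht => by simp [hψK t ht], by simpa using hψp⟩
    · exact ⟨LinearMap.toContinuousLinearMap ψ, by simpa using hψ,
        fun t ht => (hψK t ht).ge, hψp⟩

end PointedCone

section Moments

variable {X E : Type*} [MeasurableSpace X] [NormedAddCommGroup E] [NormedSpace ℝ E]

-- the moment cone `S_A` of the paper, for `f = s_A`
def momentCone (f : X → E) : PointedCone ℝ E where
  carrier := {s | ∃ μ : Measure X, Integrable f μ ∧ ∫ x, f x ∂μ = s}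
  zero_mem' := ⟨0, integrable_zero_measure, integral_zero_measure _⟩
  add_mem' := fun ⟨μ, hμ, hμs⟩ ⟨ν, hν, hνt⟩ =>
    ⟨μ + ν, hμ.add_measure hν, by rw [integral_add_measure hμ hν, hμs, hνt]⟩
  smul_mem' := fun ⟨c, hc⟩ _ ⟨μ, hμ, hμs⟩ =>
    ⟨ENNReal.ofReal c • μ, hμ.smul_measure ENNReal.ofReal_ne_top, by
      rw [integral_smul_measure, ENNReal.toReal_ofReal hc, hμs, Nonneg.mk_smul]⟩

-- the set `W(s)` of atoms of `s`
def atoms (f : X → E) (s : E) : Set X :=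
  {x | ∃ μ : Measure X, Integrable f μ ∧ ∫ y, f y ∂μ = s ∧ 0 < μ (f ⁻¹' {f x})}

/-- Richter's theorem. If the integral were outside the cone, a functional separating it from the
cone would vanish `μ`-a.e. along `f`, and the statement in its kernel gives a contradiction. -/
theorem integral_mem_hull_image_compl [FiniteDimensional ℝ E] {f : X → E} {μ : Measure X}
    {N : Set X} (hf : Integrable f μ) (hN : μ N = 0) :
    ∫ x, f x ∂μ ∈ PointedCone.hull ℝ (f '' Nᶜ) := by
  induction hn : finrank ℝ E using Nat.strong_induction_on generalizing E N with
  | _ n ih =>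
  have := FiniteDimensional.complete ℝ E
  by_contra hs
  obtain ⟨φ, hφ, hφK, hφs⟩ := PointedCone.exists_dual_nonneg_of_notMem hs
  have hφf : ∀ᵐ x ∂μ, φ (f x) = 0 := by
    have hle : ∀ᵐ x ∂μ, 0 ≤ φ (f x) := (measure_eq_zero_iff_ae_notMem.1 hN).mono
      fun x hx => hφK _ (PointedCone.subset_hull (mem_image_of_mem f hx))
    have hint : ∫ x, φ (f x) ∂μ = 0 :=
      le_antisymm (φ.integral_comp_comm hf ▸ hφs) (integral_nonneg_of_ae hle)
    exact (integral_eq_zero_iff_of_nonneg_ae hle (φ.integrable_comp hf)).1 hint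
  set V := LinearMap.ker (φ : E →ₗ[ℝ] ℝ)
  obtain ⟨W, hVW⟩ := V.exists_isCompl
  let P : E →L[ℝ] V := (V.projectionOnto W hVW).toContinuousLinearMap
  have hP : ∀ y ∈ V, (P y : E) = y := fun y hy => by
    simp [P, Submodule.projectionOnto_apply_of_mem_left hVW hy]
  have hdim : finrank ℝ V < n := hn ▸ Submodule.finrank_lt (by
    rw [Ne, LinearMap.ker_eq_top]; exact_mod_cast hφ)
  have hPs := ih _ hdim (P.integrable_comp hf) (N := N ∪ {x | φ (f x) ≠ 0})
    (measure_union_null hN (ae_iff.1 hφf)) rfl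
  rw [P.integral_comp_comm hf] at hPs
  have hsV : ∫ x, f x ∂μ ∈ V := by
    simp [V, ← φ.integral_comp_comm hf, integral_congr_ae hφf]
  have := Submodule.mem_map_of_mem (f := (V.subtype : V →ₗ[{c : ℝ // 0 ≤ c}] E)) hPs
  rw [Submodule.map_span, show (V.subtype : V →ₗ[{c : ℝ // 0 ≤ c}] E) (P _) = _ from
    hP _ hsV] at this
  refine hs (Submodule.span_mono ?_ this)
  rintro _ ⟨_, ⟨x, hx, rfl⟩, rfl⟩
  simp only [mem_compl_iff, mem_union, mem_ofPred_eq, not_or, not_not] at hx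
  exact ⟨x, hx.1, (hP _ hx.2).symm⟩

variable {f : X → E} {s : E}

theorem momentCone_le_hull_range [FiniteDimensional ℝ E] :
    momentCone f ≤ PointedCone.hull ℝ (range f) := by
  rintro _ ⟨μ, hμ, rfl⟩
  simpa using integral_mem_hull_image_compl hμ (N := ∅) measure_empty

theorem apply_mem_momentCone [CompleteSpace E] (hf : StronglyMeasurable f) (x : X) :
    f x ∈ momentCone f :=
  ⟨Measure.dirac x, integrable_dirac' hf enorm_lt_top, integral_dirac' f x hf⟩

theorem mem_atoms_iff [CompleteSpace E] (hf : StronglyMeasurable f) (hs : s ∈ momentCone f)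
    {x : X} : x ∈ atoms f s ↔ f x ∈ (momentCone f).principalFace s := by
  constructor
  · rintro ⟨μ, hμ, rfl, hpos⟩
    have hL : MeasurableSet (f ⁻¹' {f x}) := hf.measurableSet_eq_fun stronglyMeasurable_const
    refine ⟨apply_mem_momentCone hf x, ?_⟩
    by_cases hfin : μ (f ⁻¹' {f x}) = ⊤
    · -- an integrable function vanishes where it is constant on a set of infinite measure
      have hfx : f x = 0 := by
        have hconst : Integrable (fun _ => f x) (μ.restrict (f ⁻¹' {f x})) :=
          hμ.restrict.congr ((ae_restrict_iff' hL).2 (.of_forall fun y hy => hy))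
        refine (integrable_const_iff.1 hconst).resolve_right fun h => ?_
        simpa [hfin] using h.measure_univ_lt_top
      exact ⟨0, by simp [hfx]⟩
    · have hLpos : 0 < μ.real (f ⁻¹' {f x}) := ENNReal.toReal_pos hpos.ne' hfin
      refine ⟨(μ.real (f ⁻¹' {f x}))⁻¹, ?_⟩
      convert (momentCone f).smul_mem (inv_nonneg.2 hLpos.le)
        ⟨μ.restrict (f ⁻¹' {f x})ᶜ, hμ.restrict, rfl⟩ using 1
      rw [← integral_add_compl hL hμ, setIntegral_congr_fun hL (fun y hy => hy),
        setIntegral_const, smul_add, smul_smul, inv_mul_cancel₀ hLpos.ne', one_smul,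
        add_sub_cancel_left]
  · rintro ⟨-, r, hr⟩
    obtain ⟨ρ, hρ, hrρ⟩ : ∃ ρ : ℝ, 0 < ρ ∧ r ≤ ρ :=
      ⟨max r 0 + 1, by positivity, by linarith [le_max_left r 0]⟩
    obtain ⟨ν, hν, hνs⟩ := PointedCone.smul_sub_mem_of_le hs hr hrρ
    refine ⟨ENNReal.ofReal ρ⁻¹ • (Measure.dirac x + ν),
      ((integrable_dirac' hf enorm_lt_top).add_measure hν).smul_measure ENNReal.ofReal_ne_top,
      ?_, by simp [hρ]⟩
    rw [integral_smul_measure, integral_add_measure (integrable_dirac' hf enorm_lt_top) hν,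
      integral_dirac' f x hf, hνs, ENNReal.toReal_ofReal (inv_nonneg.2 hρ.le),
      add_sub_cancel, smul_smul, inv_mul_cancel₀ hρ.ne', one_smul]

theorem integrable_and_integral_eq_iff_pi {ι : Type*} [Fintype ι] {a : ι → X → ℝ}
    {μ : Measure X} {s : ι → ℝ} :
    (Integrable (fun x i => a i x) μ ∧ ∫ x, (fun i => a i x) ∂μ = s) ↔
      (∀ i, Integrable (a i) μ) ∧ ∀ i, s i = ∫ x, a i x ∂μ := by
  rw [integrable_pi_iff, funext_iff]
  refine and_congr_right fun ha => forall_congr' fun i => ?_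
  rw [eval_integral ha, eq_comm]

end Moments

theorem face_eq_conic_hull_of_atoms_general {X : Type*} [MeasurableSpace X] {m : ℕ}
    (a : Fin m → X → ℝ) (ha : ∀ i, Measurable (a i)) :
    let sA : X → (Fin m → ℝ) := fun x i => a i x
    let S : Set (Fin m → ℝ) := {s | ∃ μ : Measure X,
      (∀ i, Integrable (a i) μ) ∧ ∀ i, s i = ∫ x, a i x ∂μ}
    ∀ (s : Fin m → ℝ), s ∈ S →
    ∀ (F : Set (Fin m → ℝ)), IsExtreme ℝ S F → s ∈ intrinsicInterior ℝ F →
    let W : Set X := {x | ∃ μ : Measure X, (∀ i, Integrable (a i) μ) ∧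
      (∀ i, s i = ∫ y, a i y ∂μ) ∧ 0 < μ {y | ∀ i, a i y = a i x}}
    (∀ x : X, sA x ∈ F ↔ x ∈ W) ∧ W = sA ⁻¹' F ∧
      F = {t | ∃ (k : ℕ) (c : Fin k → ℝ) (xs : Fin k → X),
        (∀ j, 0 ≤ c j) ∧ (∀ j, xs j ∈ W) ∧ t = ∑ j, c j • sA (xs j)} := by
  intro sA S s hsS F hF hsF W
  have hf : StronglyMeasurable sA := (measurable_pi_lambda _ ha).stronglyMeasurable
  have hS : S = momentCone sA :=
    ext fun t => exists_congr fun μ => integrable_and_integral_eq_iff_pi.symm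
  have hW : W = atoms sA s := by
    ext x
    refine exists_congr fun μ => ?_
    have hfib : sA ⁻¹' {sA x} = {y | ∀ i, a i y = a i x} := ext fun _ => funext_iff
    rw [← and_assoc, ← integrable_and_integral_eq_iff_pi, and_assoc, hfib]
  rw [hS] at hsS hF
  rw [hW]
  have hFace := hF.eq_principalFace hsF
  have hatoms : atoms sA s = sA ⁻¹' F := by
    rw [hFace]
    exact ext fun x => mem_atoms_iff hf hsS
  refine ⟨fun x => (Set.ext_iff.1 hatoms x).symm, hatoms, ?_⟩
  ext t
  rw [mem_ofPred_eq, ← PointedCone.mem_hull_image_iff, hatoms, image_preimage_eq_range_inter,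
    hFace,
    ← PointedCone.isFaceOf_principalFace.eq_hull_inter
      (range_subset_iff.2 (apply_mem_momentCone hf))
      (PointedCone.isFaceOf_principalFace.le.trans momentCone_le_hull_range)]
  rfl

/-- For a moment sequence `s`, a point `x ∈ X` satisfies `s_A(x) ∈ F_s` iff
`x ∈ W(s)`, where `F_s` is the face of `S_A` having `s` in its relative
interior; consequently `W(s) = s_A⁻¹(F_s)` and `F_s = conv cone s_A(W(s))`. -/
theorem face_eq_conic_hull_of_atoms {X : Type*} [MeasurableSpace X] {m : ℕ}
    (a : Fin m → X → ℝ) (ha : ∀ i, Measurable (a i))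
    (hindep : LinearIndependent ℝ a) :
    let sA : X → (Fin m → ℝ) := fun x i => a i x
    let S : Set (Fin m → ℝ) := {s | ∃ μ : Measure X,
      (∀ i, Integrable (a i) μ) ∧ ∀ i, s i = ∫ x, a i x ∂μ}
    ∀ (s : Fin m → ℝ), s ∈ S →
    ∀ (F : Set (Fin m → ℝ)), IsExtreme ℝ S F → s ∈ intrinsicInterior ℝ F →
    let W : Set X := {x | ∃ μ : Measure X, (∀ i, Integrable (a i) μ) ∧
      (∀ i, s i = ∫ y, a i y ∂μ) ∧ 0 < μ {y | ∀ i, a i y = a i x}}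
    (∀ x : X, sA x ∈ F ↔ x ∈ W) ∧ W = sA ⁻¹' F ∧
      F = {t | ∃ (k : ℕ) (c : Fin k → ℝ) (xs : Fin k → X),
        (∀ j, 0 ≤ c j) ∧ (∀ j, xs j ∈ W) ∧ t = ∑ j, c j • sA (xs j)} :=
  face_eq_conic_hull_of_atoms_general a ha
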